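/- If G is a 2-connected chordal graph, then md(G) = 1. -/

import Mathlib

open SimpleGraph

/-- An edge-coloring `Γ` is a monochromatic disconnection coloring (MD-coloring) of `G`
if every pair of distinct vertices is separated by a monochromatic edge-cut. -/
def IsMDColoring {V : Type*} (G : SimpleGraph V) (Γ : Sym2 V → ℕ) : Prop :=
  ∀ u v : V, u ≠ v → ∃ (c : ℕ) (F : Set (Sym2 V)), F ⊆ G.edgeSet ∧
    (∀ e ∈ F, Γ e = c) ∧ ¬ (G.deleteEdges F).Reachable u v

/-- The monochromatic disconnection number of `G`: the maximum number of colors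
used by an MD-coloring of `G`. -/
noncomputable def md {V : Type*} (G : SimpleGraph V) : ℕ :=
  sSup {n : ℕ | ∃ Γ : Sym2 V → ℕ, IsMDColoring G Γ ∧ (Γ '' G.edgeSet).ncard = n}

/-- A graph is chordal if every cycle of length at least 4 has a chord: an edge of the
graph between two vertices of the cycle that is not an edge of the cycle. -/
def IsChordal {V : Type*} (G : SimpleGraph V) : Prop :=
  ∀ (v : V) (w : G.Walk v v), w.IsCycle → 4 ≤ w.length →
    ∃ a b : V, a ∈ w.support ∧ b ∈ w.support ∧ G.Adj a b ∧ s(a, b) ∉ w.edges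

/-!
In an MD-coloring the two edges at a vertex `v` of a triangle have the same colour, since
separating the ends of any edge of the triangle needs that edge and one of the other two in a
single colour class. In a chordal graph this propagates to any two neighbours `u`, `w` of `v`
joined by a path avoiding `v`, by induction on the length of the path: the cycle it closes with `v`
has a chord, which either joins `v` to an inner vertex of the path, splitting it into two shorter
ones, or shortcuts the path. When no vertex is a cut vertex this applies at every vertex, and
connectivity spreads a single colour over all edges; the constant colouring attains one colour.
-/

namespace SimpleGraph

variable {V : Type*} {G : SimpleGraph V}

namespace Walk

theorem mk_mem_edges_of_length_eq_one {u v : V} (p : G.Walk u v) (h : p.length = 1) :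
    s(u, v) ∈ p.edges := by
  cases p with
  | nil => simp at h
  | cons _ p =>
    cases p with
    | nil => simp
    | cons => simp at h

theorem exists_shorter_of_adj_of_mem_support {u w y : V} (q : G.Walk u w) (hy : y ∈ q.support)
    (h : G.Adj u y) (hq : s(u, y) ∉ q.edges) :
    ∃ r : G.Walk u w, r.support ⊆ q.support ∧ r.length < q.length := by
  classical
  refine ⟨cons h (q.dropUntil y hy), ?_, ?_⟩
  · rw [support_cons]
    exact List.cons_subset.2 ⟨q.start_mem_support, q.support_dropUntil_subset_support hy⟩
  · have hsplit := congrArg length (q.take_spec hy)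
    rw [length_append] at hsplit
    have hne0 : (q.takeUntil y hy).length ≠ 0 := fun h0 => h.ne (eq_of_length_eq_zero h0)
    have hne1 : (q.takeUntil y hy).length ≠ 1 := fun h1 =>
      hq (q.edges_takeUntil_subset_edges hy ((q.takeUntil y hy).mk_mem_edges_of_length_eq_one h1))
    simp only [length_cons]
    omega

theorem exists_shorter_of_chord {u w x y : V} (q : G.Walk u w) (hx : x ∈ q.support)
    (hy : y ∈ q.support) (hxy : G.Adj x y) (hq : s(x, y) ∉ q.edges) :
    ∃ r : G.Walk u w, r.support ⊆ q.support ∧ r.length < q.length := by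
  induction q with
  | nil =>
    simp only [support_nil, List.mem_singleton] at hx hy
    exact absurd (hx.trans hy.symm) hxy.ne
  | @cons u u' w h p ih =>
    rcases List.mem_cons.1 hx with rfl | hx'
    · exact exists_shorter_of_adj_of_mem_support _ hy hxy hq
    rcases List.mem_cons.1 hy with rfl | hy'
    · exact exists_shorter_of_adj_of_mem_support _ hx hxy.symm (by rwa [Sym2.eq_swap])
    obtain ⟨r, hr, hlt⟩ := ih hx' hy' fun he => hq (by simp [he])
    refine ⟨cons h r, ?_, by simpa using hlt⟩
    simpa [support_cons] using List.cons_subset_cons u hr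

end Walk

theorem Preconnected.subsingleton_image_edgeSet {α : Type*} {f : Sym2 V → α}
    (hG : G.Preconnected) (hf : ∀ ⦃v u w⦄, G.Adj v u → G.Adj v w → f s(v, u) = f s(v, w)) :
    (f '' G.edgeSet).Subsingleton := by
  have along_walk : ∀ {x y : V} (_ : G.Walk x y) {a b : V}, G.Adj x a → G.Adj y b →
      f s(x, a) = f s(y, b) := by
    intro x y p
    induction p with
    | nil => exact fun ha hb => hf ha hb
    | cons h _ ih => exact fun ha hb => (hf ha h).trans (Sym2.eq_swap ▸ ih h.symm hb)
  rintro _ ⟨e, he, rfl⟩ _ ⟨e', he', rfl⟩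
  induction e using Sym2.ind
  induction e' using Sym2.ind
  exact along_walk (hG _ _).some he he'

end SimpleGraph

section MDColoring

variable {V : Type*} {G : SimpleGraph V} {Γ : Sym2 V → ℕ}

theorem isMDColoring_const (G : SimpleGraph V) (c : ℕ) : IsMDColoring G fun _ => c := by
  intro u v huv
  refine ⟨c, G.edgeSet, subset_rfl, fun _ _ => rfl, ?_⟩
  simpa using huv

theorem md_eq_one_of_subsingleton (hG : G.edgeSet.Nonempty)
    (h : ∀ Γ, IsMDColoring G Γ → (Γ '' G.edgeSet).Subsingleton) : md G = 1 := by
  suffices {n : ℕ | ∃ Γ : Sym2 V → ℕ, IsMDColoring G Γ ∧ (Γ '' G.edgeSet).ncard = n} = {1} by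
    rw [md, this, csSup_singleton]
  ext n
  constructor
  · rintro ⟨Γ, hΓ, rfl⟩
    obtain ⟨c, hc⟩ := ((h Γ hΓ).eq_empty_or_singleton).resolve_left (hG.image Γ).ne_empty
    simp [hc]
  · rintro rfl
    exact ⟨fun _ => 0, isMDColoring_const G 0, by simp [hG.image_const]⟩

namespace IsMDColoring

theorem exists_mem_edges_color_eq (hΓ : IsMDColoring G Γ) {y z : V} (h : G.Adj y z)
    (p : G.Walk y z) : ∃ e ∈ p.edges, Γ e = Γ s(y, z) := by
  obtain ⟨c, F, -, hF, hsep⟩ := hΓ y z h.ne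
  obtain ⟨e, heF, hep⟩ := p.exists_mem_edges_of_not_reachable_deleteEdges hsep
  obtain ⟨e', he'F, he'⟩ := h.toWalk.exists_mem_edges_of_not_reachable_deleteEdges hsep
  simp only [Adj.toWalk, Walk.edges_cons, Walk.edges_nil, List.mem_singleton] at he'
  exact ⟨e, hep, (hF e heF).trans (he' ▸ hF e' he'F).symm⟩

theorem color_eq_of_triangle (hΓ : IsMDColoring G Γ) {v u w : V} (hu : G.Adj v u)
    (hw : G.Adj v w) (huw : G.Adj u w) : Γ s(v, u) = Γ s(v, w) := by
  have h₁ := hΓ.exists_mem_edges_color_eq hu (.cons hw (.cons huw.symm .nil))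
  have h₂ := hΓ.exists_mem_edges_color_eq hw (.cons hu (.cons huw .nil))
  have h₃ := hΓ.exists_mem_edges_color_eq huw (.cons hu.symm (.cons hw .nil))
  simp only [Walk.edges_cons, Walk.edges_nil, List.mem_cons, List.not_mem_nil, or_false,
    exists_eq_or_imp, exists_eq_left] at h₁ h₂ h₃
  rw [Sym2.eq_swap (a := w) (b := u)] at h₁
  rw [Sym2.eq_swap (a := u) (b := v)] at h₃
  omega

theorem color_eq_of_isPath (hΓ : IsMDColoring G Γ) (hch : IsChordal G) {v u w : V}
    (hu : G.Adj v u) (hw : G.Adj v w) (q : G.Walk u w) (hq : q.IsPath) (hv : v ∉ q.support) :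
    Γ s(v, u) = Γ s(v, w) := by
  classical
  obtain h₀ | h₁ | h₂ : q.length = 0 ∨ q.length = 1 ∨ 2 ≤ q.length := by omega
  · obtain rfl := Walk.eq_of_length_eq_zero h₀
    rfl
  · exact hΓ.color_eq_of_triangle hu hw (Walk.adj_of_length_eq_one h₁)
  have huw : u ≠ w := by
    rintro rfl
    simp [(Walk.isPath_iff_nil.1 hq).length_eq_zero] at h₂
  have hwv : s(w, v) ∉ q.edges := fun h => hv (q.snd_mem_support_of_mem_edges h)
  let C : G.Walk w w := .cons hw.symm (.cons hu q)
  have hC : C.IsCycle := by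
    refine (Walk.cons_isCycle_iff _ _).2 ⟨(Walk.cons_isPath_iff _ _).2 ⟨hq, hv⟩, ?_⟩
    simp [hwv, huw.symm, hw.ne']
  obtain ⟨a, b, ha, hb, hab, habC⟩ := hch w C hC (by simp only [C, Walk.length_cons]; omega)
  have chord_from_v : ∀ x ∈ q.support, G.Adj v x → s(v, x) ∉ C.edges →
      Γ s(v, u) = Γ s(v, w) := by
    intro x hx hvx hxC
    have hxu : x ≠ u := by rintro rfl; simp [C] at hxC
    have hxw : x ≠ w := by rintro rfl; simp [C, Sym2.eq_swap] at hxC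
    have := q.length_takeUntil_lt_length hx hxw
    have := q.length_dropUntil_lt_length hx hxu
    exact (hΓ.color_eq_of_isPath hch hu hvx _ (hq.takeUntil hx)
        fun h => hv (q.support_takeUntil_subset_support hx h)).trans
      (hΓ.color_eq_of_isPath hch hvx hw _ (hq.dropUntil hx)
        fun h => hv (q.support_dropUntil_subset_support hx h))
  have hsupp : ∀ x ∈ C.support, x = v ∨ x ∈ q.support := by
    simp only [C, Walk.support_cons, List.mem_cons]
    rintro x (rfl | rfl | hx)
    exacts [.inr q.end_mem_support, .inl rfl, .inr hx]
  rcases hsupp a ha with rfl | haq <;> rcases hsupp b hb with rfl | hbq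
  · exact absurd rfl hab.ne
  · exact chord_from_v b hbq hab habC
  · exact chord_from_v a haq hab.symm (by rwa [Sym2.eq_swap])
  obtain ⟨r, hr, hlt⟩ := q.exists_shorter_of_chord haq hbq hab fun h => habC (by simp [C, h])
  have := r.length_bypass_le_length
  exact hΓ.color_eq_of_isPath hch hu hw r.bypass r.bypass_isPath
    fun h => hv (hr (r.support_bypass_subset_support h))
termination_by q.length

theorem color_eq_of_adj_of_adj (hΓ : IsMDColoring G Γ) (hch : IsChordal G) {v u w : V}
    (hv : (G.induce ({v}ᶜ : Set V)).Preconnected) (hu : G.Adj v u) (hw : G.Adj v w) :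
    Γ s(v, u) = Γ s(v, w) := by
  classical
  obtain ⟨W⟩ := hv ⟨u, hu.ne'⟩ ⟨w, hw.ne'⟩
  let p : G.Walk u w := W.map (Embedding.induce _).toHom
  refine hΓ.color_eq_of_isPath hch hu hw p.bypass p.bypass_isPath fun h => ?_
  have hvp : v ∈ (W.map (Embedding.induce _).toHom).support := p.support_bypass_subset_support h
  rw [Walk.support_map] at hvp
  obtain ⟨x, -, hx⟩ := List.mem_map.1 hvp
  exact x.2 hx

end IsMDColoring

end MDColoring

theorem stmt_17_general {V : Type*} (G : SimpleGraph V)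
    (hconn : G.Connected)
    (hcut : ∀ v : V, (G.induce ({v}ᶜ : Set V)).Connected)
    (hchordal : IsChordal G) :
    md G = 1 := by
  have hedge : G.edgeSet.Nonempty := by
    obtain ⟨v⟩ := hconn.nonempty
    obtain ⟨⟨u, hu⟩⟩ := (hcut v).nonempty
    have : Nontrivial V := ⟨⟨u, v, hu⟩⟩
    obtain ⟨w, hvw⟩ := hconn.preconnected.exists_adj_of_nontrivial v
    exact ⟨s(v, w), hvw⟩
  exact md_eq_one_of_subsingleton hedge fun Γ hΓ =>
    hconn.preconnected.subsingleton_image_edgeSet fun v _ _ hu hw =>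
      hΓ.color_eq_of_adj_of_adj hchordal (hcut v).preconnected hu hw

theorem stmt_17 {V : Type*} [Fintype V] (G : SimpleGraph V)
    (hcard : 3 ≤ Fintype.card V) (hconn : G.Connected)
    (hcut : ∀ v : V, (G.induce ({v}ᶜ : Set V)).Connected)
    (hchordal : IsChordal G) :
    md G = 1 :=
  stmt_17_general G hconn hcut hchordal
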